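/- Consider the Markov chain on [0, ∞) with kernel P(0, dy) = β(y)dy and, for x > 0, P(x, dy) = γ(x)δ_0(dy) + (1 − γ(x))δ_{x+1}(dy), where 0 < γ(x) < 1 is continuous and β is a probability density supported on (0, a), 0 < a ≤ ∞. If there exists x₁ > 0 such that ∏_{k=[x₁]}^{∞} sup_{k ≤ x < k+1}(1 − γ(x)) = 0, then the chain is recurrent. If there exists x₁ > 0 such that ∏_{k=[x₁]}^{∞} inf_{k ≤ x < k+1}(1 − γ(x)) > 0, then the chain is transient. -/

import Mathlib

open MeasureTheory ENNReal Set

/-- `iterP P n x` is the `n`-step distribution of the chain with kernel `P` started at `x`. -/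
noncomputable def iterP (P : ℝ → Measure ℝ) : ℕ → ℝ → Measure ℝ
  | 0 => fun x => Measure.dirac x
  | (n + 1) => fun x => (iterP P n x).bind P

/-- Recurrence for the chain on `[0,∞)`: the point `0` is an accessible atom of positive
irreducibility measure, so recurrence amounts to `∑_n Pⁿ(x, {0}) = ∞` for every state `x ≥ 0`. -/
def RecurrentAtZero (P : ℝ → Measure ℝ) : Prop :=
  ∀ x : ℝ, 0 ≤ x → (∑' n : ℕ, iterP P (n + 1) x {0}) = ⊤

/-- Transience for the chain on `[0,∞)`: `{0}` being petite, transience amounts to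
`∑_n Pⁿ(x, {0}) < ∞` for every state `x ≥ 0`. -/
def TransientAtZero (P : ℝ → Measure ℝ) : Prop :=
  ∀ x : ℝ, 0 ≤ x → (∑' n : ℕ, iterP P (n + 1) x {0}) ≠ ⊤

section RTAux

/-- ENNReal Cauchy product. -/
lemma RT_cauchy (A v : ℕ → ℝ≥0∞) :
    (∑' n : ℕ, ∑ m ∈ Finset.range (n + 1), A m * v (n - m)) = (∑' m, A m) * ∑' j, v j := by
  have h1 : ∀ n : ℕ, (∑ m ∈ Finset.range (n + 1), A m * v (n - m))
      = ∑' m : ℕ, (if m ≤ n then A m * v (n - m) else 0) := by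
    intro n
    rw [tsum_eq_sum (s := Finset.range (n + 1))
      (fun m hm => if_neg (fun h => hm (Finset.mem_range.mpr (Nat.lt_succ_of_le h))))]
    exact Finset.sum_congr rfl fun m hm =>
      (if_pos (Nat.lt_succ_iff.mp (Finset.mem_range.mp hm))).symm
  calc (∑' n : ℕ, ∑ m ∈ Finset.range (n + 1), A m * v (n - m))
      = ∑' (n : ℕ) (m : ℕ), (if m ≤ n then A m * v (n - m) else 0) := tsum_congr h1
    _ = ∑' (m : ℕ) (n : ℕ), (if m ≤ n then A m * v (n - m) else 0) := ENNReal.tsum_comm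
    _ = ∑' (m : ℕ) (j : ℕ), A m * v j := by
        refine tsum_congr fun m => ?_
        have hinj : Function.Injective (fun j : ℕ => m + j) := fun a b h => by
          simpa using h
        have hsupp : Function.support (fun n : ℕ => if m ≤ n then A m * v (n - m) else 0)
            ⊆ Set.range (fun j : ℕ => m + j) := by
          intro n hn
          by_cases hmn : m ≤ n
          · exact ⟨n - m, by simpa using Nat.add_sub_cancel' hmn⟩
          · simp [if_neg hmn] at hn
        have := hinj.tsum_eq (f := fun n : ℕ => if m ≤ n then A m * v (n - m) else 0) hsupp
        rw [← this]
        refine tsum_congr fun j => ?_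
        simp
    _ = (∑' m, A m) * ∑' j, v j := by
        simp_rw [ENNReal.tsum_mul_left]
        exact ENNReal.tsum_mul_right

lemma RT_iterP_measurable {P : ℝ → Measure ℝ} (hPm : Measurable P) :
    ∀ n, Measurable (iterP P n)
  | 0 => Measure.measurable_dirac
  | (n + 1) => (Measure.measurable_bind' hPm).comp (RT_iterP_measurable hPm n)

lemma RT_iterP_succ {P : ℝ → Measure ℝ} (hPm : Measurable P) (n : ℕ) (x : ℝ) :
    iterP P (n + 1) x = (P x).bind (iterP P n) := by
  induction n generalizing x with
  | zero =>
    show (Measure.dirac x).bind P = (P x).bind (iterP P 0)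
    rw [Measure.dirac_bind hPm]
    exact Measure.bind_dirac.symm
  | succ n ih =>
    show (iterP P (n + 1) x).bind P = _
    rw [ih x, Measure.bind_bind (RT_iterP_measurable hPm n).aemeasurable hPm.aemeasurable]
    rfl

lemma RT_iterP_apply {P : ℝ → Measure ℝ} (hPm : Measurable P) (n : ℕ) (x : ℝ) :
    iterP P (n + 1) x {0} = ∫⁻ y, iterP P n y {0} ∂(P x) := by
  rw [RT_iterP_succ hPm n x,
    Measure.bind_apply (measurableSet_singleton 0) (RT_iterP_measurable hPm n).aemeasurable]

lemma RT_prod_nonneg {f : ℕ → ℝ} (h0 : ∀ k, 0 ≤ f k) (s : Finset ℕ) : 0 ≤ ∏ k ∈ s, f k :=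
  Finset.prod_nonneg fun k _ => h0 k

lemma RT_prod_le_one {f : ℕ → ℝ} (h0 : ∀ k, 0 ≤ f k) (h1 : ∀ k, f k ≤ 1) (s : Finset ℕ) :
    ∏ k ∈ s, f k ≤ 1 :=
  Finset.prod_le_one (fun k _ => h0 k) (fun k _ => h1 k)

lemma RT_bddBelow {f : ℕ → ℝ} (h0 : ∀ k, 0 ≤ f k) (b : ℕ) :
    BddBelow (Set.range fun N : ℕ => ∏ k ∈ Finset.Icc b N, f k) := by
  refine ⟨0, ?_⟩
  rintro x ⟨N, rfl⟩
  exact RT_prod_nonneg h0 _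

lemma RT_small {f : ℕ → ℝ} (h0 : ∀ k, 0 < f k) (h1 : ∀ k, f k ≤ 1) {b' : ℕ}
    (hz : (⨅ N : ℕ, ∏ k ∈ Finset.Icc b' N, f k) = 0) (b : ℕ) {ε : ℝ} (hε : 0 < ε) :
    ∃ M : ℕ, ∏ k ∈ Finset.Ico b (b + M), f k < ε := by
  have h0' : ∀ k, 0 ≤ f k := fun k => (h0 k).le
  set D := ∏ k ∈ Finset.Ico b' b, f k with hD
  have hDpos : 0 < D := Finset.prod_pos fun k _ => h0 k
  have h2 : (⨅ N : ℕ, ∏ k ∈ Finset.Icc b' N, f k) < ε * D := by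
    rw [hz]; positivity
  obtain ⟨N, hN⟩ := exists_lt_of_ciInf_lt h2
  set N' := max N (max b b') with hN'def
  have hbN' : b ≤ N' := le_max_of_le_right (le_max_left _ _)
  have hb'N' : b' ≤ N' := le_max_of_le_right (le_max_right _ _)
  have hmono : (∏ k ∈ Finset.Icc b' N', f k) ≤ ∏ k ∈ Finset.Icc b' N, f k := by
    rcases le_or_gt b' (N + 1) with hcase | hcase
    · rw [← Finset.Ico_add_one_right_eq_Icc, ← Finset.Ico_add_one_right_eq_Icc,
        ← Finset.prod_Ico_consecutive f hcase (show N + 1 ≤ N' + 1 from Nat.succ_le_succ (le_max_left N (max b b')))]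
      exact mul_le_of_le_one_right (RT_prod_nonneg h0' _) (RT_prod_le_one h0' h1 _)
    · have he : Finset.Icc b' N = ∅ := Finset.Icc_eq_empty (by omega)
      rw [he, Finset.prod_empty]
      exact RT_prod_le_one h0' h1 _
  have hlt : (∏ k ∈ Finset.Icc b' N', f k) < ε * D := lt_of_le_of_lt hmono hN
  refine ⟨N' + 1 - b, ?_⟩
  have hbM : b + (N' + 1 - b) = N' + 1 := by omega
  rw [hbM]
  rcases le_or_gt b' b with hbb | hbb
  · -- D * X < ε * D
    have hsplit : D * (∏ k ∈ Finset.Ico b (N' + 1), f k) = ∏ k ∈ Finset.Ico b' (N' + 1), f k :=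
      Finset.prod_Ico_consecutive f hbb (by omega)
    have : D * (∏ k ∈ Finset.Ico b (N' + 1), f k) < D * ε := by
      rw [hsplit, Finset.Ico_add_one_right_eq_Icc]
      calc (∏ k ∈ Finset.Icc b' N', f k) < ε * D := hlt
        _ = D * ε := by ring
    exact (mul_lt_mul_iff_right₀ hDpos).mp this
  · have hDone : D = 1 := by
      rw [hD, Finset.Ico_eq_empty (by omega), Finset.prod_empty]
    have hsplit : (∏ k ∈ Finset.Ico b b', f k) * (∏ k ∈ Finset.Ico b' (N' + 1), f k)
        = ∏ k ∈ Finset.Ico b (N' + 1), f k :=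
      Finset.prod_Ico_consecutive f hbb.le (by omega)
    calc (∏ k ∈ Finset.Ico b (N' + 1), f k)
        = (∏ k ∈ Finset.Ico b b', f k) * (∏ k ∈ Finset.Ico b' (N' + 1), f k) := hsplit.symm
      _ ≤ ∏ k ∈ Finset.Ico b' (N' + 1), f k :=
          mul_le_of_le_one_left (RT_prod_nonneg h0' _) (RT_prod_le_one h0' h1 _)
      _ = ∏ k ∈ Finset.Icc b' N', f k := by rw [Finset.Ico_add_one_right_eq_Icc]
      _ < ε * D := hlt
      _ = ε := by rw [hDone, mul_one]

lemma RT_big {f : ℕ → ℝ} (h0 : ∀ k, 0 < f k) (h1 : ∀ k, f k ≤ 1) {b' : ℕ}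
    (hp : 0 < ⨅ N : ℕ, ∏ k ∈ Finset.Icc b' N, f k) (b : ℕ) :
    0 < ⨅ N : ℕ, ∏ k ∈ Finset.Icc b N, f k := by
  have h0' : ∀ k, 0 ≤ f k := fun k => (h0 k).le
  set c₀ := ⨅ N : ℕ, ∏ k ∈ Finset.Icc b' N, f k with hc₀
  have hc₀le : ∀ N : ℕ, c₀ ≤ ∏ k ∈ Finset.Icc b' N, f k := fun N =>
    ciInf_le (RT_bddBelow h0' b') N
  have hc₀1 : c₀ ≤ 1 := (hc₀le 0).trans (RT_prod_le_one h0' h1 _)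
  set D' := ∏ k ∈ Finset.Ico b b', f k with hD'
  have hD'pos : 0 < D' := Finset.prod_pos fun k _ => h0 k
  have hD'1 : D' ≤ 1 := RT_prod_le_one h0' h1 _
  have hclaim : ∀ N : ℕ, c₀ * D' ≤ ∏ k ∈ Finset.Icc b N, f k := by
    intro N
    rw [← Finset.Ico_add_one_right_eq_Icc]
    rcases le_or_gt b' b with hbb | hbb
    · have hD'one : D' = 1 := by
        rw [hD', Finset.Ico_eq_empty (by omega), Finset.prod_empty]
      rw [hD'one, mul_one]
      rcases le_or_gt (N + 1) b with hNb | hNb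
      · rcases eq_or_lt_of_le hNb with hNb' | hNb'
        · rw [← hNb', Finset.Ico_eq_empty (by omega), Finset.prod_empty]; exact hc₀1
        · rw [Finset.Ico_eq_empty (by omega), Finset.prod_empty]; exact hc₀1
      · have hsplit : (∏ k ∈ Finset.Ico b' b, f k) * (∏ k ∈ Finset.Ico b (N + 1), f k)
            = ∏ k ∈ Finset.Ico b' (N + 1), f k :=
          Finset.prod_Ico_consecutive f hbb (by omega)
        have h3 : (∏ k ∈ Finset.Ico b' (N + 1), f k) ≤ ∏ k ∈ Finset.Ico b (N + 1), f k := by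
          rw [← hsplit]
          exact mul_le_of_le_one_left (RT_prod_nonneg h0' _) (RT_prod_le_one h0' h1 _)
        calc c₀ ≤ ∏ k ∈ Finset.Icc b' N, f k := hc₀le N
          _ = ∏ k ∈ Finset.Ico b' (N + 1), f k := by rw [Finset.Ico_add_one_right_eq_Icc]
          _ ≤ _ := h3
    · rcases le_or_gt b' (N + 1) with hcase | hcase
      · have hsplit : D' * (∏ k ∈ Finset.Ico b' (N + 1), f k)
            = ∏ k ∈ Finset.Ico b (N + 1), f k :=
          Finset.prod_Ico_consecutive f hbb.le hcase
        calc c₀ * D' = D' * c₀ := by ring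
          _ ≤ D' * ∏ k ∈ Finset.Ico b' (N + 1), f k := by
              refine mul_le_mul_of_nonneg_left ?_ hD'pos.le
              rw [Finset.Ico_add_one_right_eq_Icc]; exact hc₀le N
          _ = _ := hsplit
      · rcases le_or_gt (N + 1) b with hNb | hNb
        · rw [Finset.Ico_eq_empty (by omega), Finset.prod_empty]
          calc c₀ * D' ≤ 1 * 1 := mul_le_mul hc₀1 hD'1 hD'pos.le zero_le_one
            _ = 1 := by ring
        · have hsplit : (∏ k ∈ Finset.Ico b (N + 1), f k) * (∏ k ∈ Finset.Ico (N + 1) b', f k)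
              = D' := Finset.prod_Ico_consecutive f (by omega) (by omega)
          have h4 : D' ≤ ∏ k ∈ Finset.Ico b (N + 1), f k := by
            rw [← hsplit]
            exact mul_le_of_le_one_right (RT_prod_nonneg h0' _) (RT_prod_le_one h0' h1 _)
          calc c₀ * D' ≤ 1 * D' := mul_le_mul_of_nonneg_right hc₀1 hD'pos.le
            _ = D' := by ring
            _ ≤ _ := h4
  have hpos : 0 < c₀ * D' := mul_pos hp hD'pos
  exact lt_of_lt_of_le hpos (le_ciInf hclaim)

lemma RT_iInf_le_Ico {f : ℕ → ℝ} (h0 : ∀ k, 0 ≤ f k) (h1 : ∀ k, f k ≤ 1) (b M : ℕ) :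
    (⨅ N : ℕ, ∏ k ∈ Finset.Icc b N, f k) ≤ ∏ k ∈ Finset.Ico b (b + M), f k := by
  rcases M with _ | M
  · simp only [Nat.add_zero, Finset.Ico_self, Finset.prod_empty]
    exact ((ciInf_le (RT_bddBelow h0 b) 0).trans (RT_prod_le_one h0 h1 _))
  · rw [show b + (M + 1) = (b + M) + 1 by omega, Finset.Ico_add_one_right_eq_Icc]
    exact ciInf_le (RT_bddBelow h0 b) (b + M)

end RTAux

set_option maxHeartbeats 2000000 in
/-- For the chain on `[0,∞)` with `P(0,dy) = β(y)dy` (with `β` a probability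
density supported in `(0,a)`, `0 < a ≤ ∞`) and `P(x,·) = γ(x) δ₀ + (1−γ(x)) δ_{x+1}` for
`x > 0`, where `0 < γ < 1` is continuous: if for some `x₁ > 0` the product
`∏_{k=⌊x₁⌋}^∞ sup_{k ≤ x < k+1} (1 − γ(x))` is `0`, the chain is recurrent; if for some
`x₁ > 0` the product `∏_{k=⌊x₁⌋}^∞ inf_{k ≤ x < k+1} (1 − γ(x))` is positive, the chain is
transient.  (Infinite products of terms in `[0,1]` are written as the infimum of the partial
products.) -/
theorem recurrence_transience_criterion
    (γ : ℝ → ℝ) (hγc : Continuous γ) (hγ : ∀ x : ℝ, 0 ≤ x → 0 < γ x ∧ γ x < 1)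
    (a : ℝ≥0∞) (ha : 0 < a)
    (β : ℝ → ℝ) (hβ : ∀ x, 0 ≤ β x)
    (hβsupp : ∀ x : ℝ, β x ≠ 0 → 0 < x ∧ ENNReal.ofReal x < a)
    (hβint : ∫ x in Ioi (0 : ℝ), β x = 1)
    (P : ℝ → Measure ℝ) (hPm : Measurable P)
    (hP0 : P 0 = volume.withDensity fun y => ENNReal.ofReal (β y))
    (hPpos : ∀ x : ℝ, 0 < x →
      P x = ENNReal.ofReal (γ x) • Measure.dirac 0
            + ENNReal.ofReal (1 - γ x) • Measure.dirac (x + 1)) :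
    ((∃ x₁ : ℝ, 0 < x₁ ∧
        (⨅ N : ℕ, ∏ k ∈ Finset.Icc ⌊x₁⌋₊ N,
          sSup ((fun y => 1 - γ y) '' Ico (k : ℝ) (k + 1))) = 0) →
      RecurrentAtZero P) ∧
    ((∃ x₁ : ℝ, 0 < x₁ ∧
        0 < ⨅ N : ℕ, ∏ k ∈ Finset.Icc ⌊x₁⌋₊ N,
          sInf ((fun y => 1 - γ y) '' Ico (k : ℝ) (k + 1))) →
      TransientAtZero P) := by
  classical
  -- measurability of evaluation maps
  have hmeasn : ∀ n : ℕ, Measurable fun y : ℝ => iterP P n y ({0} : Set ℝ) := fun n =>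
    (Measure.measurable_coe (measurableSet_singleton 0)).comp (RT_iterP_measurable hPm n)
  have h00 : iterP P 0 0 ({0} : Set ℝ) = 1 := by
    simp [iterP, Measure.dirac_apply]
  have hdirac0 : ∀ y : ℝ, y ≠ 0 → iterP P 0 y ({0} : Set ℝ) = 0 := by
    intro y hy
    simp [iterP, Measure.dirac_apply, Set.indicator, hy]
  have hfront : ∀ (n : ℕ) (x : ℝ), 0 < x → iterP P (n + 1) x {0}
      = ENNReal.ofReal (γ x) * iterP P n 0 {0}
        + ENNReal.ofReal (1 - γ x) * iterP P n (x + 1) {0} := by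
    intro n x hx
    rw [RT_iterP_apply hPm n x, hPpos x hx, lintegral_add_measure, lintegral_smul_measure,
      lintegral_smul_measure, lintegral_dirac' _ (hmeasn n), lintegral_dirac' _ (hmeasn n), smul_eq_mul, smul_eq_mul]
  -- real finite products along the deterministic path
  set pprod : ℕ → ℝ → ℝ := fun m y => ∏ n ∈ Finset.range m, (1 - γ (y + n)) with hpprod_def
  have hpprod_nonneg : ∀ (m : ℕ) (y : ℝ), 0 ≤ y → 0 ≤ pprod m y := by
    intro m y hy
    refine Finset.prod_nonneg fun n _ => ?_
    have := (hγ (y + n) (by positivity)).2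
    linarith
  set A : ℕ → ℝ → ℝ≥0∞ := fun m y =>
      ENNReal.ofReal (pprod m y) * ENNReal.ofReal (γ (y + m)) with hA_def
  set piE : ℕ → ℝ → ℝ≥0∞ := fun m y => ENNReal.ofReal (pprod m y) with hpiE_def
  set hh : ℝ → ℝ≥0∞ := fun y => ∑' m : ℕ, A m y with hh_def
  have hA0 : ∀ y : ℝ, A 0 y = ENNReal.ofReal (γ y) := by
    intro y
    simp [hA_def, hpprod_def]
  -- the key identity: decomposition over the first return to 0
  have hkey : ∀ (n : ℕ) (x : ℝ), 0 < x →
      iterP P (n + 1) x {0} = ∑ m ∈ Finset.range (n + 1), A m x * iterP P (n - m) 0 {0} := by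
    intro n
    induction n with
    | zero =>
      intro x hx
      rw [hfront 0 x hx, hdirac0 (x + 1) (by linarith), mul_zero, add_zero,
        Finset.sum_range_one]
      rw [h00]
      simp [hA_def, hpprod_def]
    | succ n ih =>
      intro x hx
      have hx1 : (0:ℝ) < x + 1 := by linarith
      have hterm : ∀ m : ℕ,
          ENNReal.ofReal (1 - γ x) * (A m (x + 1) * iterP P (n - m) 0 {0})
          = A (m + 1) x * iterP P (n + 1 - (m + 1)) 0 {0} := by
        intro m
        have hps : pprod (m + 1) x = pprod m (x + 1) * (1 - γ x) := by
          simp only [hpprod_def]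
          rw [Finset.prod_range_succ']
          congr 1
          · refine Finset.prod_congr rfl fun j _ => ?_
            have hj : x + ((j : ℕ) + 1 : ℕ) = x + 1 + (j : ℝ) := by push_cast; ring
            rw [hj]
          · norm_num
        have hA' : A (m + 1) x = ENNReal.ofReal (1 - γ x) * A m (x + 1) := by
          simp only [hA_def, hps]
          rw [ENNReal.ofReal_mul (hpprod_nonneg m (x + 1) hx1.le)]
          have hm' : x + ((m : ℕ) + 1 : ℕ) = x + 1 + (m : ℝ) := by push_cast; ring
          rw [hm']
          ring
        rw [hA', Nat.add_sub_add_right]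
        ring
      rw [hfront (n + 1) x hx, ih (x + 1) hx1, Finset.mul_sum,
        Finset.sum_range_succ' (fun m => A m x * iterP P (n + 1 - m) 0 {0}) (n + 1)]
      rw [Finset.sum_congr rfl (fun m _ => hterm m), hA0, Nat.sub_zero]
      exact add_comm _ _
  -- telescoping: partial sums of A plus the remaining product equal 1
  have hSum : ∀ (M : ℕ) (y : ℝ), 0 ≤ y →
      (∑ m ∈ Finset.range M, A m y) + piE M y = 1 := by
    intro M
    induction M with
    | zero =>
      intro y hy
      simp [hpiE_def, hpprod_def]
    | succ M ih =>
      intro y hy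
      have hyM : (0:ℝ) ≤ y + M := by positivity
      have hstep : A M y + piE (M + 1) y = piE M y := by
        have hp : pprod (M + 1) y = pprod M y * (1 - γ (y + M)) := by
          simp only [hpprod_def]
          exact Finset.prod_range_succ _ _
        have h0p : 0 ≤ pprod M y := hpprod_nonneg M y hy
        have hg1 : 0 ≤ γ (y + M) := (hγ (y + M) hyM).1.le
        have hg2 : γ (y + M) ≤ 1 := (hγ (y + M) hyM).2.le
        simp only [hA_def, hpiE_def, hp]
        rw [← ENNReal.ofReal_mul h0p,
          ← ENNReal.ofReal_add (mul_nonneg h0p hg1) (mul_nonneg h0p (by linarith))]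
        congr 1
        ring
      rw [Finset.sum_range_succ, add_assoc, hstep]
      exact ih y hy
  have hpiEne : ∀ (M : ℕ) (y : ℝ), piE M y ≠ ⊤ := by
    intro M y
    simp [hpiE_def]
  have hhle1 : ∀ y : ℝ, 0 ≤ y → hh y ≤ 1 := by
    intro y hy
    show (∑' m : ℕ, A m y) ≤ 1
    rw [ENNReal.tsum_eq_iSup_nat]
    refine iSup_le fun M => ?_
    calc (∑ m ∈ Finset.range M, A m y) ≤ (∑ m ∈ Finset.range M, A m y) + piE M y :=
          le_self_add
      _ = 1 := hSum M y hy
  -- the total-visits identity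
  have hq_ident : ∀ x : ℝ, 0 < x →
      (∑' n : ℕ, iterP P (n + 1) x {0}) = hh x * ∑' j : ℕ, iterP P j 0 {0} := by
    intro x hx
    calc (∑' n : ℕ, iterP P (n + 1) x {0})
        = ∑' n : ℕ, ∑ m ∈ Finset.range (n + 1), A m x * iterP P (n - m) 0 {0} :=
          tsum_congr fun n => hkey n x hx
      _ = (∑' m : ℕ, A m x) * ∑' j : ℕ, iterP P j 0 {0} :=
          RT_cauchy (fun m => A m x) (fun j => iterP P j 0 {0})
      _ = hh x * ∑' j : ℕ, iterP P j 0 {0} := rfl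
  have hsumu : (∑' j : ℕ, iterP P j 0 {0}) = 1 + ∑' n : ℕ, iterP P (n + 1) 0 {0} := by
    rw [tsum_eq_zero_add' ENNReal.summable, h00]
  -- facts about P 0
  have hP0Iic : P 0 (Iic (0:ℝ)) = 0 := by
    rw [hP0, withDensity_apply _ measurableSet_Iic]
    have hz : ∫⁻ y in Iic (0:ℝ), ENNReal.ofReal (β y) = ∫⁻ _ in Iic (0:ℝ), (0:ℝ≥0∞) := by
      refine setLIntegral_congr_fun measurableSet_Iic (fun y hy => ?_)
      have hb : β y = 0 := by
        by_contra hb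
        exact absurd (hβsupp y hb).1 (not_lt.mpr hy)
      simp [hb]
    rw [hz, lintegral_zero]
  have haepos : ∀ᵐ y ∂(P 0), 0 < y := by
    rw [ae_iff]
    have hset : {y : ℝ | ¬ 0 < y} = Iic 0 := by
      ext y; simp [not_lt]
    rw [hset]
    exact hP0Iic
  have hP0univ : P 0 Set.univ = 1 := by
    rw [hP0, withDensity_apply _ MeasurableSet.univ, Measure.restrict_univ]
    rw [← lintegral_add_compl (fun y => ENNReal.ofReal (β y)) (measurableSet_Ioi (a := (0:ℝ)))]
    have h2 : ∫⁻ y in (Ioi (0:ℝ))ᶜ, ENNReal.ofReal (β y) = 0 := by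
      rw [compl_Ioi]
      have hz : ∫⁻ y in Iic (0:ℝ), ENNReal.ofReal (β y) = ∫⁻ _ in Iic (0:ℝ), (0:ℝ≥0∞) := by
        refine setLIntegral_congr_fun measurableSet_Iic
          (fun y hy => ?_)
        have hb : β y = 0 := by
          by_contra hb
          exact absurd (hβsupp y hb).1 (not_lt.mpr hy)
        simp [hb]
      rw [hz, lintegral_zero]
    have hint : IntegrableOn β (Ioi (0:ℝ)) := by
      by_contra hni
      rw [integral_undef hni] at hβint
      norm_num at hβint
    have h1 : ∫⁻ y in Ioi (0:ℝ), ENNReal.ofReal (β y) = 1 := by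
      rw [← ofReal_integral_eq_lintegral_ofReal hint
        (Filter.Eventually.of_forall fun y => hβ y), hβint, ENNReal.ofReal_one]
    rw [h1, h2, add_zero]
  have hq0 : (∑' n : ℕ, iterP P (n + 1) 0 {0})
      = ∫⁻ y, (∑' n : ℕ, iterP P n y {0}) ∂(P 0) := by
    calc (∑' n : ℕ, iterP P (n + 1) 0 {0})
        = ∑' n : ℕ, ∫⁻ y, iterP P n y {0} ∂(P 0) :=
          tsum_congr fun n => RT_iterP_apply hPm n 0
      _ = ∫⁻ y, (∑' n : ℕ, iterP P n y {0}) ∂(P 0) :=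
          (lintegral_tsum fun n => (hmeasn n).aemeasurable).symm
  have hsplit : ∀ y : ℝ, y ≠ 0 →
      (∑' n : ℕ, iterP P n y {0}) = ∑' n : ℕ, iterP P (n + 1) y {0} := by
    intro y hy
    rw [tsum_eq_zero_add' ENNReal.summable, hdirac0 y hy, zero_add]
  constructor
  · -- recurrence
    rintro ⟨x₁, hx₁, hzero⟩
    set s : ℕ → ℝ := fun k => sSup ((fun y => 1 - γ y) '' Ico (k : ℝ) (k + 1)) with hs_def
    have hsbddA : ∀ k : ℕ, BddAbove ((fun y => 1 - γ y) '' Ico (k : ℝ) ((k:ℝ) + 1)) := by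
      intro k
      refine ⟨1, ?_⟩
      rintro z ⟨y, hy, rfl⟩
      have hy0 : (0:ℝ) ≤ y := le_trans (by positivity) hy.1
      have := (hγ y hy0).1
      simp only
      linarith
    have hmem : ∀ k : ℕ, (1 - γ (k:ℝ)) ∈ (fun y => 1 - γ y) '' Ico (k : ℝ) ((k:ℝ) + 1) :=
      fun k => ⟨(k:ℝ), ⟨le_refl _, by linarith⟩, rfl⟩
    have hs0 : ∀ k, 0 < s k := by
      intro k
      have h1 : (1 - γ (k:ℝ)) ≤ s k := le_csSup (hsbddA k) (hmem k)
      have := (hγ (k:ℝ) (by positivity)).2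
      linarith
    have hs1 : ∀ k, s k ≤ 1 := by
      intro k
      refine Real.sSup_le ?_ zero_le_one
      rintro z ⟨y, hy, rfl⟩
      have hy0 : (0:ℝ) ≤ y := le_trans (by positivity) hy.1
      have := (hγ y hy0).1
      simp only
      linarith
    have hR1 : ∀ (y : ℝ), 0 ≤ y → ∀ M : ℕ,
        pprod M y ≤ ∏ k ∈ Finset.Ico ⌊y⌋₊ (⌊y⌋₊ + M), s k := by
      intro y hy M
      rw [Finset.prod_Ico_eq_prod_range, show ⌊y⌋₊ + M - ⌊y⌋₊ = M by omega]
      simp only [hpprod_def]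
      refine Finset.prod_le_prod (fun n _ => ?_) (fun n _ => ?_)
      · have := (hγ (y + n) (by positivity)).2
        linarith
      · refine le_csSup (hsbddA _) ⟨y + n, ⟨?_, ?_⟩, rfl⟩
        · push_cast
          have := Nat.floor_le hy
          linarith
        · push_cast
          have := Nat.lt_floor_add_one y
          linarith
    have hpizero : ∀ y : ℝ, 0 ≤ y → (⨅ M : ℕ, piE M y) = 0 := by
      intro y hy
      by_contra hne
      have hletop : (⨅ M : ℕ, piE M y) ≤ 1 := by
        refine (iInf_le _ 0).trans ?_
        simp [hpiE_def, hpprod_def]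
      have hnetop : (⨅ M : ℕ, piE M y) ≠ ⊤ := by
        intro h
        rw [h] at hletop
        exact absurd hletop (by simp)
      have hεpos : 0 < (⨅ M : ℕ, piE M y).toReal := ENNReal.toReal_pos hne hnetop
      obtain ⟨M, hM⟩ := RT_small hs0 hs1 hzero ⌊y⌋₊ hεpos
      have hlt : piE M y < ⨅ M : ℕ, piE M y := by
        have h1 : pprod M y < (⨅ M : ℕ, piE M y).toReal := lt_of_le_of_lt (hR1 y hy M) hM
        calc piE M y = ENNReal.ofReal (pprod M y) := by rw [hpiE_def]
          _ < ENNReal.ofReal ((⨅ M : ℕ, piE M y).toReal) :=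
              (ENNReal.ofReal_lt_ofReal_iff hεpos).mpr h1
          _ = ⨅ M : ℕ, piE M y := ENNReal.ofReal_toReal hnetop
      exact absurd (iInf_le _ M) (not_le.mpr hlt)
    have hh1 : ∀ y : ℝ, 0 < y → hh y = 1 := by
      intro y hy
      show (∑' m : ℕ, A m y) = 1
      rw [ENNReal.tsum_eq_iSup_nat]
      have hSM : ∀ M : ℕ, (∑ m ∈ Finset.range M, A m y) = 1 - piE M y := fun M =>
        ENNReal.eq_sub_of_add_eq (hpiEne M y) (hSum M y hy.le)
      calc (⨆ M : ℕ, ∑ m ∈ Finset.range M, A m y) = ⨆ M : ℕ, ((1:ℝ≥0∞) - piE M y) :=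
            iSup_congr hSM
        _ = 1 - ⨅ M : ℕ, piE M y := (ENNReal.sub_iInf).symm
        _ = 1 := by rw [hpizero y hy.le, tsub_zero]
    have hq0eq : (∑' n : ℕ, iterP P (n + 1) 0 {0})
        = 1 + (∑' n : ℕ, iterP P (n + 1) 0 {0}) := by
      conv_lhs => rw [hq0]
      have hae : ∀ᵐ y ∂(P 0), (∑' n : ℕ, iterP P n y {0})
          = 1 + (∑' n : ℕ, iterP P (n + 1) 0 {0}) := by
        filter_upwards [haepos] with y hy
        rw [hsplit y hy.ne', hq_ident y hy, hh1 y hy, one_mul, hsumu]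
      rw [lintegral_congr_ae hae, lintegral_const, hP0univ, mul_one]
    have hq0top : (∑' n : ℕ, iterP P (n + 1) 0 {0}) = ⊤ := by
      by_contra hfin
      have h3 : (∑' n : ℕ, iterP P (n + 1) 0 {0}) + 0
          = (∑' n : ℕ, iterP P (n + 1) 0 {0}) + 1 := by
        rw [add_zero]
        conv_lhs => rw [hq0eq]
        rw [add_comm]
      exact zero_ne_one ((ENNReal.add_right_inj hfin).mp h3)
    intro x hx
    rcases eq_or_lt_of_le hx with h0x | h0x
    · rw [← h0x]
      exact hq0top
    · rw [hq_ident x h0x]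
      have hfull : (∑' j : ℕ, iterP P j 0 {0}) = ⊤ := by
        rw [hsumu, hq0top]
        simp
      rw [hfull]
      refine ENNReal.mul_top ?_
      have hpos : 0 < A 0 x := by
        rw [hA0]
        exact ENNReal.ofReal_pos.mpr (hγ x h0x.le).1
      have hle : A 0 x ≤ hh x := by
        rw [hh_def]
        exact ENNReal.le_tsum 0
      exact (lt_of_lt_of_le hpos hle).ne'
  · -- transience
    rintro ⟨x₁, hx₁, hposinf⟩
    set i : ℕ → ℝ := fun k => sInf ((fun y => 1 - γ y) '' Ico (k : ℝ) (k + 1)) with hi_def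
    have hmem : ∀ k : ℕ, (1 - γ (k:ℝ)) ∈ (fun y => 1 - γ y) '' Ico (k : ℝ) ((k:ℝ) + 1) :=
      fun k => ⟨(k:ℝ), ⟨le_refl _, by linarith⟩, rfl⟩
    have hibddB : ∀ k : ℕ, BddBelow ((fun y => 1 - γ y) '' Ico (k : ℝ) ((k:ℝ) + 1)) := by
      intro k
      refine ⟨0, ?_⟩
      rintro z ⟨y, hy, rfl⟩
      have hy0 : (0:ℝ) ≤ y := le_trans (by positivity) hy.1
      have := (hγ y hy0).2
      simp only
      linarith
    have hi0 : ∀ k, 0 < i k := by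
      intro k
      obtain ⟨y₀, hy₀K, hmax⟩ := (isCompact_Icc (a := (k:ℝ)) (b := (k:ℝ) + 1)).exists_isMaxOn
        ⟨(k:ℝ), by constructor <;> simp <;> linarith⟩ hγc.continuousOn
      have hy₀0 : (0:ℝ) ≤ y₀ := le_trans (by positivity) hy₀K.1
      have hlt1 : γ y₀ < 1 := (hγ y₀ hy₀0).2
      have hlb : ∀ z ∈ (fun y => 1 - γ y) '' Ico (k : ℝ) ((k:ℝ) + 1), 1 - γ y₀ ≤ z := by
        rintro z ⟨y, hy, rfl⟩
        have hle := (isMaxOn_iff.mp hmax) y (Ico_subset_Icc_self hy)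
        simp only
        linarith
      have h2 : 1 - γ y₀ ≤ i k := le_csInf ⟨_, hmem k⟩ hlb
      linarith
    have hi0' : ∀ k, 0 ≤ i k := fun k => (hi0 k).le
    have hi1 : ∀ k, i k ≤ 1 := by
      intro k
      have h1 : i k ≤ 1 - γ (k:ℝ) := csInf_le (hibddB k) (hmem k)
      have := (hγ (k:ℝ) (by positivity)).1
      linarith
    have hR2 : ∀ (y : ℝ), 0 ≤ y → ∀ M : ℕ,
        (∏ k ∈ Finset.Ico ⌊y⌋₊ (⌊y⌋₊ + M), i k) ≤ pprod M y := by
      intro y hy M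
      rw [Finset.prod_Ico_eq_prod_range, show ⌊y⌋₊ + M - ⌊y⌋₊ = M by omega]
      simp only [hpprod_def]
      refine Finset.prod_le_prod (fun n _ => hi0' _) (fun n _ => ?_)
      refine csInf_le (hibddB _) ⟨y + n, ⟨?_, ?_⟩, rfl⟩
      · push_cast
        have := Nat.floor_le hy
        linarith
      · push_cast
        have := Nat.lt_floor_add_one y
        linarith
    set cc : ℕ → ℝ := fun b => ⨅ N : ℕ, ∏ k ∈ Finset.Icc b N, i k with hcc_def
    have hccpos : ∀ b, 0 < cc b := fun b => RT_big hi0 hi1 hposinf b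
    have hcc1 : ∀ b, cc b ≤ 1 := fun b =>
      (ciInf_le (RT_bddBelow hi0' b) 0).trans (RT_prod_le_one hi0' hi1 _)
    have hpiE_ge : ∀ y : ℝ, 0 ≤ y → ∀ M : ℕ, ENNReal.ofReal (cc ⌊y⌋₊) ≤ piE M y := by
      intro y hy M
      show ENNReal.ofReal (cc ⌊y⌋₊) ≤ ENNReal.ofReal (pprod M y)
      exact ENNReal.ofReal_le_ofReal ((RT_iInf_le_Ico hi0' hi1 ⌊y⌋₊ M).trans (hR2 y hy M))
    have hhle : ∀ y : ℝ, 0 ≤ y → hh y ≤ 1 - ENNReal.ofReal (cc ⌊y⌋₊) := by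
      intro y hy
      show (∑' m : ℕ, A m y) ≤ 1 - ENNReal.ofReal (cc ⌊y⌋₊)
      rw [ENNReal.tsum_eq_iSup_nat]
      refine iSup_le fun M => ?_
      have hSM : (∑ m ∈ Finset.range M, A m y) = 1 - piE M y :=
        ENNReal.eq_sub_of_add_eq (hpiEne M y) (hSum M y hy)
      rw [hSM]
      exact tsub_le_tsub_left (hpiE_ge y hy M) 1
    set φ : ℝ → ℝ≥0∞ := fun y => ENNReal.ofReal (cc ⌊y⌋₊) with hφ_def
    have hφm : Measurable φ := by
      have : φ = (fun b : ℕ => ENNReal.ofReal (cc b)) ∘ Nat.floor := rfl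
      rw [this]
      exact measurable_from_top.comp Nat.measurable_floor
    have hφle1 : ∀ y, φ y ≤ 1 := fun y => ENNReal.ofReal_le_one.mpr (hcc1 _)
    set t := ∫⁻ y, φ y ∂(P 0) with ht_def
    have htle1 : t ≤ 1 := by
      calc t ≤ ∫⁻ _, 1 ∂(P 0) := lintegral_mono hφle1
        _ = 1 := by rw [lintegral_one, hP0univ]
    have htpos : 0 < t := by
      rw [ht_def, lintegral_pos_iff_support hφm]
      have hsupp : Function.support φ = Set.univ := by
        ext y
        simp only [Function.mem_support, Set.mem_univ, iff_true]
        exact (ENNReal.ofReal_pos.mpr (hccpos _)).ne'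
      rw [hsupp, hP0univ]
      norm_num
    have htne0 : t ≠ 0 := htpos.ne'
    have htnetop : t ≠ ⊤ := (htle1.trans_lt ENNReal.one_lt_top).ne
    have hAm : ∀ m : ℕ, Measurable (A m) := by
      intro m
      have hAem : A m = fun y => ENNReal.ofReal (pprod m y) * ENNReal.ofReal (γ (y + (m:ℝ))) := rfl
      rw [hAem]
      apply Measurable.fun_mul
      · apply ENNReal.measurable_ofReal.comp
        apply Continuous.measurable
        simp only [hpprod_def]
        apply continuous_finset_prod
        intro n _
        exact continuous_const.sub (hγc.comp (continuous_id.add continuous_const))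
      · exact ENNReal.measurable_ofReal.comp
          ((hγc.comp (continuous_id.add continuous_const)).measurable)
    have hhm : Measurable hh := Measurable.ennreal_tsum hAm
    set ρ := 1 - t with hρ_def
    have hrle : (∫⁻ y, hh y ∂(P 0)) ≤ ρ := by
      have h1 : (∫⁻ y, hh y ∂(P 0)) ≤ ∫⁻ y, (1 - φ y) ∂(P 0) := by
        refine lintegral_mono_ae ?_
        filter_upwards [haepos] with y hy
        exact hhle y hy.le
      have h2 : (∫⁻ y, ((fun _ => (1:ℝ≥0∞)) y - φ y) ∂(P 0)) = (∫⁻ _, (1:ℝ≥0∞) ∂(P 0)) - t :=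
        lintegral_sub hφm (by rw [← ht_def]; exact htnetop)
          (Filter.Eventually.of_forall hφle1)
      rw [lintegral_one, hP0univ] at h2
      exact h1.trans (le_of_eq h2)
    set B := t⁻¹ with hB_def
    have hBnetop : B ≠ ⊤ := ENNReal.inv_ne_top.mpr htne0
    have hρB : ρ * (B + 1) ≤ B := by
      rw [← ENNReal.mul_le_mul_iff_left htne0 htnetop]
      have hBt : B * t = 1 := ENNReal.inv_mul_cancel htne0 htnetop
      calc ρ * (B + 1) * t = ρ * (B * t + t) := by ring
        _ = ρ * (1 + t) := by rw [hBt]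
        _ = ρ + ρ * t := by ring
        _ ≤ (1 - t) + 1 * t := by
            refine add_le_add (le_of_eq hρ_def) (mul_le_mul_left ?_ t)
            rw [hρ_def]
            exact tsub_le_self
        _ = (1 - t) + t := by rw [one_mul]
        _ = 1 := by
            rw [add_comm]
            exact add_tsub_cancel_of_le htle1
        _ = B * t := hBt.symm
    have hQ : ∀ N : ℕ, (∑ n ∈ Finset.range N, iterP P (n + 1) 0 {0}) ≤ B := by
      intro N
      induction N with
      | zero => simp
      | succ N ih =>
        have hstep : (∑ n ∈ Finset.range (N + 1), iterP P (n + 1) 0 {0})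
            = ∫⁻ y, (∑ n ∈ Finset.range (N + 1), iterP P n y {0}) ∂(P 0) := by
          rw [lintegral_finset_sum _ (fun n _ => hmeasn n)]
          exact Finset.sum_congr rfl fun n _ => RT_iterP_apply hPm n 0
        rw [hstep]
        have hb : ∀ᵐ y ∂(P 0), (∑ n ∈ Finset.range (N + 1), iterP P n y {0})
            ≤ hh y * ((∑ n ∈ Finset.range N, iterP P (n + 1) 0 {0}) + 1) := by
          filter_upwards [haepos] with y hy
          rw [Finset.sum_range_succ' (fun n => iterP P n y {0}) N, hdirac0 y hy.ne', add_zero]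
          have hv : ∀ n ∈ Finset.range N, iterP P (n + 1) y {0}
              = ∑ m ∈ Finset.range (n + 1),
                  A m y * (if n - m < N then iterP P (n - m) 0 {0} else 0) := by
            intro n hn
            rw [hkey n y hy]
            refine Finset.sum_congr rfl fun m hm => ?_
            have hlt : n - m < N := by
              have := Finset.mem_range.mp hn
              omega
            rw [if_pos hlt]
          rw [Finset.sum_congr rfl hv]
          calc (∑ n ∈ Finset.range N, ∑ m ∈ Finset.range (n + 1),
                  A m y * (if n - m < N then iterP P (n - m) 0 {0} else 0))
              ≤ ∑' n : ℕ, ∑ m ∈ Finset.range (n + 1),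
                  A m y * (if n - m < N then iterP P (n - m) 0 {0} else 0) :=
                Summable.sum_le_tsum _ (fun _ _ => zero_le) ENNReal.summable
            _ = (∑' m : ℕ, A m y)
                  * ∑' j : ℕ, (if j < N then iterP P j 0 {0} else 0) :=
                RT_cauchy (fun m => A m y) (fun j => if j < N then iterP P j 0 {0} else 0)
            _ ≤ hh y * ((∑ n ∈ Finset.range N, iterP P (n + 1) 0 {0}) + 1) := by
                refine mul_le_mul_right ?_ _
                have h5 : (∑' j : ℕ, (if j < N then iterP P j 0 {0} else 0))
                    = ∑ j ∈ Finset.range N, iterP P j 0 {0} := by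
                  rw [tsum_eq_sum (s := Finset.range N)
                    (fun j hj => if_neg (fun h => hj (Finset.mem_range.mpr h)))]
                  exact Finset.sum_congr rfl fun j hj => if_pos (Finset.mem_range.mp hj)
                rw [h5]
                have h6 : (∑ j ∈ Finset.range (N + 1), iterP P j 0 {0})
                    = (∑ n ∈ Finset.range N, iterP P (n + 1) 0 {0}) + iterP P 0 0 {0} :=
                  Finset.sum_range_succ' _ N
                calc (∑ j ∈ Finset.range N, iterP P j 0 {0})
                    ≤ ∑ j ∈ Finset.range (N + 1), iterP P j 0 {0} :=
                      Finset.sum_le_sum_of_subset (Finset.range_subset_range.mpr (by omega))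
                  _ = (∑ n ∈ Finset.range N, iterP P (n + 1) 0 {0}) + 1 := by
                      rw [h6, h00]
        calc (∫⁻ y, (∑ n ∈ Finset.range (N + 1), iterP P n y {0}) ∂(P 0))
            ≤ ∫⁻ y, hh y * ((∑ n ∈ Finset.range N, iterP P (n + 1) 0 {0}) + 1) ∂(P 0) :=
              lintegral_mono_ae hb
          _ = (∫⁻ y, hh y ∂(P 0)) * ((∑ n ∈ Finset.range N, iterP P (n + 1) 0 {0}) + 1) :=
              lintegral_mul_const _ hhm
          _ ≤ ρ * ((∑ n ∈ Finset.range N, iterP P (n + 1) 0 {0}) + 1) :=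
              mul_le_mul_left hrle _
          _ ≤ ρ * (B + 1) := mul_le_mul_right (add_le_add_left ih 1) _
          _ ≤ B := hρB
    have hq0le : (∑' n : ℕ, iterP P (n + 1) 0 {0}) ≤ B := by
      rw [ENNReal.tsum_eq_iSup_nat]
      exact iSup_le hQ
    have hq0ne : (∑' n : ℕ, iterP P (n + 1) 0 {0}) ≠ ⊤ :=
      (hq0le.trans_lt (lt_top_iff_ne_top.mpr hBnetop)).ne
    intro x hx
    rcases eq_or_lt_of_le hx with h0x | h0x
    · rw [← h0x]
      exact hq0ne
    · rw [hq_ident x h0x]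
      have hfin : (∑' j : ℕ, iterP P j 0 {0}) ≠ ⊤ := by
        rw [hsumu]
        exact ENNReal.add_ne_top.mpr ⟨ENNReal.one_ne_top, hq0ne⟩
      exact ENNReal.mul_ne_top ((hhle1 x h0x.le).trans_lt ENNReal.one_lt_top).ne hfin
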